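/- Let (M,ρ) be a complete metric space and let f, g : M → ℝ be Lipschitz functions such that f is bounded below and |∇̃f|(x) ≥ |∇̃g|(x) for all x ∈ M. Then for every ε > 0, inf_M (f - g) = inf { f(x) - g(x) : x ∈ ε-Crit f }. -/

import Mathlib

/-!
Fix `x₀`, a small `c > 0`, and put `φ = (1 + c) f - g`. Ekeland's principle, applied to `f` on
the closed set `T = {y | φ y + c ε ρ(y, x₀) ≤ φ x₀}`, yields `z ∈ T` that is `ε`-critical for `f`
relative to `T`. It is `ε`-critical on all of `M`: at a point where `|∇̃f| > ε`, the bound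
`|∇̃g| ≤ |∇̃f|` gives a `y` along which `f` drops at rate `> ε` while `φ` drops at rate `≥ c ε`,
so `y` stays in `T`. Finally `f z - g z ≤ f x₀ - g x₀ + c (f x₀ - inf f)`, and `c` is arbitrary.
-/

open Filter Topology ENNReal

/-- The positive part `[x]⁺` of an extended real, as an element of `ℝ≥0∞`. -/
noncomputable def erealPos (x : EReal) : ℝ≥0∞ := if x = ⊤ then ⊤ else ENNReal.ofReal x.toReal

/-- The global slope `|∇̃ f|(x) = sup_{y ≠ x} [f x - f y]⁺ / ρ(x,y)` of `f : M → ℝ ∪ {+∞}`. -/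
noncomputable def globalSlope {M : Type*} [MetricSpace M] (f : M → EReal) (x : M) : ℝ≥0∞ :=
  ⨆ y ∈ {y : M | y ≠ x}, erealPos (f x - f y) / edist x y

/-- The local slope `|∇ f|(x) = limsup_{y → x, y ≠ x} [f x - f y]⁺ / ρ(x,y)`. -/
noncomputable def localSlope {M : Type*} [MetricSpace M] (f : M → EReal) (x : M) : ℝ≥0∞ :=
  Filter.limsup (fun y => erealPos (f x - f y) / edist x y) (𝓝[≠] x)

/-- `ε`-global-critical points: `x ∈ dom f` with `f y ≥ f x - ε·ρ(y,x)` for all `y`. -/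
def epsCrit {M : Type*} [MetricSpace M] (ε : ℝ) (f : M → EReal) : Set M :=
  {x | f x ≠ ⊤ ∧ ∀ y, f x - ↑(ε * dist y x) ≤ f y}

open Set
open scoped NNReal

section Slope

variable {M : Type*} [MetricSpace M] {f : M → ℝ} {x : M} {r : ℝ}

theorem globalSlope_coe_le_ofReal_iff (hr : 0 ≤ r) :
    globalSlope (fun y => (f y : EReal)) x ≤ ENNReal.ofReal r ↔
      ∀ y, f x - f y ≤ r * dist x y := by
  simp only [globalSlope, iSup₂_le_iff, mem_ofPred_eq]
  refine forall_congr' fun y => ?_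
  rcases eq_or_ne y x with rfl | hy
  · simp
  · rw [← EReal.coe_sub, erealPos, if_neg (EReal.coe_ne_top _), EReal.toReal_coe,
      ENNReal.div_le_iff (edist_pos.2 hy.symm).ne' (edist_ne_top _ _), edist_dist,
      ← ENNReal.ofReal_mul hr, ENNReal.ofReal_le_ofReal_iff (by positivity)]
    simp [hy]

theorem ofReal_lt_globalSlope_coe_iff (hr : 0 ≤ r) :
    ENNReal.ofReal r < globalSlope (fun y => (f y : EReal)) x ↔
      ∃ y, r * dist x y < f x - f y := by
  simpa only [not_le, not_forall] using (globalSlope_coe_le_ofReal_iff (f := f) (x := x) hr).not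

theorem LipschitzWith.globalSlope_coe_le {K : ℝ≥0} (hf : LipschitzWith K f) (x : M) :
    globalSlope (fun y => (f y : EReal)) x ≤ K := by
  rw [← ENNReal.ofReal_coe_nnreal, globalSlope_coe_le_ofReal_iff K.coe_nonneg]
  exact fun y => (le_abs_self _).trans (hf.dist_le_mul x y)

theorem mem_epsCrit_coe_iff_globalSlope_le (hr : 0 ≤ r) :
    x ∈ epsCrit r (fun y => (f y : EReal)) ↔
      globalSlope (fun y => (f y : EReal)) x ≤ ENNReal.ofReal r := by
  simp only [epsCrit, mem_ofPred_eq, EReal.coe_ne_top, ne_eq, not_false_eq_true, true_and,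
    ← EReal.coe_sub, EReal.coe_le_coe_iff, globalSlope_coe_le_ofReal_iff hr, dist_comm x]
  exact forall_congr' fun y => by constructor <;> intro h <;> linarith

end Slope

section Ekeland

variable {X : Type*} [MetricSpace X] {f : X → ℝ} {ε : ℝ} {a b : X}

def ekelandSet (f : X → ℝ) (ε : ℝ) (a : X) : Set X :=
  {y | f y + ε * dist y a ≤ f a}

theorem mem_ekelandSet_self : a ∈ ekelandSet f ε a := by
  simp [ekelandSet]

theorem ekelandSet_subset (hε : 0 ≤ ε) (hb : b ∈ ekelandSet f ε a) :
    ekelandSet f ε b ⊆ ekelandSet f ε a := fun y hy => by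
  simp only [ekelandSet, mem_ofPred_eq] at hb hy ⊢
  nlinarith [dist_triangle y b a]

theorem isClosed_ekelandSet (hf : LowerSemicontinuous f) (a : X) :
    IsClosed (ekelandSet f ε a) :=
  (hf.add (by fun_prop : Continuous fun y => ε * dist y a).lowerSemicontinuous).isClosed_preimage
    (f a)

theorem exists_seq_antitone_ekelandSet [Nonempty X] (hbdd : BddBelow (range f)) (hε : 0 ≤ ε) :
    ∃ x : ℕ → X, Antitone (fun n => ekelandSet f ε (x n)) ∧
      ∀ n, ∀ y ∈ ekelandSet f ε (x (n + 1)), f (x (n + 1)) - f y < 1 / (n + 1) := by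
  have hnext : ∀ (n : ℕ) (a : X), ∃ b ∈ ekelandSet f ε a,
      f b < sInf (f '' ekelandSet f ε a) + 1 / (n + 1) := fun n a => by
    obtain ⟨_, ⟨b, hb, rfl⟩, hlt⟩ :=
      Real.lt_sInf_add_pos (Set.Nonempty.image f ⟨a, mem_ekelandSet_self⟩)
        (by positivity : (0 : ℝ) < 1 / (n + 1))
    exact ⟨b, hb, hlt⟩
  choose next hnext_mem hnext_lt using hnext
  let x : ℕ → X := fun n => Nat.rec (Classical.arbitrary X) next n
  refine ⟨x, antitone_nat_of_succ_le fun n => ekelandSet_subset hε (hnext_mem n (x n)),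
    fun n y hy => ?_⟩
  have hy' : y ∈ ekelandSet f ε (x n) := ekelandSet_subset hε (hnext_mem n (x n)) hy
  have := csInf_le (hbdd.mono (image_subset_range _ _)) (mem_image_of_mem f hy')
  linarith [hnext_lt n (x n)]

theorem exists_forall_le_add_mul_dist [CompleteSpace X] [Nonempty X]
    (hf : LowerSemicontinuous f) (hbdd : BddBelow (range f)) (hε : 0 < ε) :
    ∃ z, ∀ y, f z ≤ f y + ε * dist y z := by
  obtain ⟨x, hanti, hclose⟩ := exists_seq_antitone_ekelandSet hbdd hε.le
  have hball : ∀ n, ∀ y ∈ ekelandSet f ε (x (n + 1)), ε * dist y (x (n + 1)) ≤ 1 / (n + 1) := by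
    intro n y hy
    have := hclose n y hy
    simp only [ekelandSet, mem_ofPred_eq] at hy
    linarith
  have hcauchy : CauchySeq fun n => x (n + 1) := by
    refine cauchySeq_of_le_tendsto_0 (fun N : ℕ => 2 / ε * (1 / (N + 1)))
      (fun n m N hn hm => ?_) ?_
    · have mem : ∀ k, N ≤ k → x (k + 1) ∈ ekelandSet f ε (x (N + 1)) := fun k hk =>
        hanti (by omega) mem_ekelandSet_self
      rw [div_mul_eq_mul_div, le_div_iff₀ hε]
      linarith [mul_le_mul_of_nonneg_left
        (dist_triangle_right (x (n + 1)) (x (m + 1)) (x (N + 1))) hε.le,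
        hball N _ (mem n hn), hball N _ (mem m hm)]
    · simpa only [mul_zero] using tendsto_one_div_add_atTop_nhds_zero_nat.const_mul (2 / ε)
  obtain ⟨z, hz⟩ := cauchySeq_tendsto_of_complete hcauchy
  have hz_mem : ∀ n, z ∈ ekelandSet f ε (x n) := fun n =>
    (isClosed_ekelandSet hf _).mem_of_tendsto hz
      (eventually_atTop.2 ⟨n, fun m hm => hanti (by omega) mem_ekelandSet_self⟩)
  refine ⟨z, fun y => ?_⟩
  by_contra! hyz
  have hy : y ∈ ekelandSet f ε z := hyz.le
  have hgap : ∀ n : ℕ, f z - f y ≤ 1 / (n + 1) := fun n => by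
    have := hz_mem (n + 1)
    simp only [ekelandSet, mem_ofPred_eq] at this
    linarith [hclose n y (ekelandSet_subset hε.le (hz_mem (n + 1)) hy),
      mul_nonneg hε.le (dist_nonneg (x := z) (y := x (n + 1)))]
  linarith [ge_of_tendsto' tendsto_one_div_add_atTop_nhds_zero_nat hgap,
    mul_nonneg hε.le (dist_nonneg (x := y) (y := z))]

end Ekeland

section Crit

variable {M : Type*} [MetricSpace M] {f g : M → ℝ} {ε c : ℝ}

theorem exists_descent_of_globalSlope_le {x : M}
    (hslope : globalSlope (fun y => (g y : EReal)) x ≤ globalSlope (fun y => (f y : EReal)) x)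
    (hfin : globalSlope (fun y => (f y : EReal)) x ≠ ⊤) (hε : 0 ≤ ε)
    (hx : ENNReal.ofReal ε < globalSlope (fun y => (f y : EReal)) x) (hc : 0 < c) :
    ∃ y, ε * dist x y < f x - f y ∧
      c * ε * dist x y ≤ ((1 + c) * f x - g x) - ((1 + c) * f y - g y) := by
  set s := (globalSlope (fun y => (f y : EReal)) x).toReal
  have hs : globalSlope (fun y => (f y : EReal)) x = ENNReal.ofReal s := (ofReal_toReal hfin).symm
  have hεs : ε < s := (ofReal_lt_iff_lt_toReal hε hfin).1 hx
  -- `t` lies strictly between `ε` and `s`, and is chosen so that `(1 + c) t - s = c ε`.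
  set t := (s + c * ε) / (1 + c)
  have hεt : ε ≤ t := by rw [le_div_iff₀ (by linarith)]; linarith
  have hts : t < s := by rw [div_lt_iff₀ (by linarith)]; nlinarith
  have hts' : ENNReal.ofReal t < globalSlope (fun y => (f y : EReal)) x :=
    hs ▸ ofReal_lt_ofReal_iff'.2 ⟨hts, by linarith⟩
  obtain ⟨y, hy⟩ := (ofReal_lt_globalSlope_coe_iff (by linarith)).1 hts'
  have hg := (globalSlope_coe_le_ofReal_iff (by linarith)).1 (hs ▸ hslope) y
  have hct : (1 + c) * t = s + c * ε := mul_div_cancel₀ _ (by linarith)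
  have hd := dist_nonneg (x := x) (y := y)
  exact ⟨y, by nlinarith, by nlinarith⟩

theorem exists_mem_epsCrit_of_globalSlope_le [CompleteSpace M] {K : ℝ≥0}
    (hf : LipschitzWith K f) (hg : Continuous g) (hbdd : BddBelow (range f))
    (hslope : ∀ x, globalSlope (fun y => (g y : EReal)) x ≤ globalSlope (fun y => (f y : EReal)) x)
    (hε : 0 < ε) (hc : 0 < c) (x₀ : M) :
    ∃ z ∈ epsCrit ε (fun y => (f y : EReal)), (1 + c) * f z - g z ≤ (1 + c) * f x₀ - g x₀ := by
  set φ : M → ℝ := fun x => (1 + c) * f x - g x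
  have hφ : Continuous φ := (continuous_const.mul hf.continuous).sub hg
  set T := ekelandSet φ (c * ε) x₀
  have : CompleteSpace T := (isClosed_ekelandSet hφ.lowerSemicontinuous x₀).completeSpace_coe
  have : Nonempty T := ⟨⟨x₀, mem_ekelandSet_self⟩⟩
  obtain ⟨⟨z, hzT⟩, hz⟩ := exists_forall_le_add_mul_dist (f := fun y : T => f y)
    (hf.continuous.comp continuous_subtype_val).lowerSemicontinuous
    (hbdd.mono (range_comp_subset_range _ _)) hε
  refine ⟨z, ?_, (le_add_of_nonneg_right (by positivity)).trans hzT⟩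
  rw [mem_epsCrit_coe_iff_globalSlope_le hε.le]
  by_contra! hlt
  obtain ⟨y, hfy, hφy⟩ := exists_descent_of_globalSlope_le (hslope z)
    (ne_top_of_le_ne_top coe_ne_top (hf.globalSlope_coe_le z)) hε.le hlt hc
  have hyT : y ∈ T := ekelandSet_subset (by positivity) hzT (by
    simp only [ekelandSet, mem_ofPred_eq, dist_comm y]; linarith)
  have := hz ⟨y, hyT⟩
  simp only [Subtype.dist_eq, dist_comm y] at this
  linarith

theorem exists_mem_epsCrit_sub_le [CompleteSpace M] {K : ℝ≥0}
    (hf : LipschitzWith K f) (hg : Continuous g) (hbdd : BddBelow (range f))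
    (hslope : ∀ x, globalSlope (fun y => (g y : EReal)) x ≤ globalSlope (fun y => (f y : EReal)) x)
    (hε : 0 < ε) {x₀ : M} {r : ℝ} (hr : f x₀ - g x₀ < r) :
    ∃ z ∈ epsCrit ε (fun y => (f y : EReal)), f z - g z ≤ r := by
  obtain ⟨B, hB⟩ := hbdd
  have hB₀ : B ≤ f x₀ := hB (mem_range_self x₀)
  set c := (r - (f x₀ - g x₀)) / (f x₀ - B + 1)
  have hc : 0 < c := div_pos (by linarith) (by linarith)
  have hcB : c * (f x₀ - B) ≤ r - (f x₀ - g x₀) := by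
    rw [div_mul_eq_mul_div, div_le_iff₀ (by linarith)]
    nlinarith
  obtain ⟨z, hz, hφz⟩ := exists_mem_epsCrit_of_globalSlope_le hf hg ⟨B, hB⟩ hslope hε hc x₀
  have hBz := mul_le_mul_of_nonneg_left (hB (mem_range_self z)) hc.le
  exact ⟨z, hz, by nlinarith⟩

end Crit

/-- for Lipschitz `f, g : M → ℝ` on a complete metric space with `f` bounded
below and `|∇̃f| ≥ |∇̃g|` everywhere, `inf (f - g) = inf_{ε-Crit f} (f - g)` for all `ε > 0`. -/
theorem inf_sub_eq_inf_on_epsCrit_lipschitz {M : Type*} [MetricSpace M] [CompleteSpace M]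
    (f g : M → ℝ) (hf : ∃ K, LipschitzWith K f) (hg : ∃ K, LipschitzWith K g)
    (hbdd : BddBelow (Set.range f))
    (hslope : ∀ x, globalSlope (fun y => (g y : EReal)) x ≤
      globalSlope (fun y => (f y : EReal)) x) :
    ∀ ε : ℝ, 0 < ε →
      ⨅ x : M, ((f x - g x : ℝ) : EReal) =
        ⨅ x ∈ epsCrit ε (fun y => (f y : EReal)), ((f x - g x : ℝ) : EReal) := by
  intro ε hε
  obtain ⟨_, hf⟩ := hf
  obtain ⟨_, hg⟩ := hg
  refine le_antisymm (le_iInf₂ fun x _ => iInf_le _ x) (le_iInf fun x₀ => ?_)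
  refine EReal.le_of_forall_lt_iff_le.1 fun r hr => ?_
  obtain ⟨z, hz, hzr⟩ :=
    exists_mem_epsCrit_sub_le hf hg.continuous hbdd hslope hε (EReal.coe_lt_coe_iff.1 hr)
  exact (iInf₂_le z hz).trans (EReal.coe_le_coe_iff.2 hzr)
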